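/- Let a, b, c, d ∈ ℍ all be nonzero and suppose a − b·d⁻¹·c, b − a·c⁻¹·d, c − d·b⁻¹·a, d − c·a⁻¹·b are all nonzero. Then the matrix with entries x = (a − b·d⁻¹·c)⁻¹, y = (c − d·b⁻¹·a)⁻¹, t = (b − a·c⁻¹·d)⁻¹, z = (d − c·a⁻¹·b)⁻¹ is a right inverse of (a, b; c, d). -/
import Mathlib


open Quaternion

lemma auxA {K : Type*} [DivisionRing K] (a b c d : K) (hc : c ≠ 0) (hd : d ≠ 0)
    (h1 : a - b * d⁻¹ * c ≠ 0) :
    a * (a - b * d⁻¹ * c)⁻¹ + b * (b - a * c⁻¹ * d)⁻¹ = 1 := by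
  have key : b - a * c⁻¹ * d = -((a - b * d⁻¹ * c) * (c⁻¹ * d)) := by
    rw [sub_mul]
    have : b * d⁻¹ * c * (c⁻¹ * d) = b := by
      rw [mul_assoc (b * d⁻¹) c, ← mul_assoc c, mul_inv_cancel₀ hc, one_mul,
        mul_assoc, inv_mul_cancel₀ hd, mul_one]
    rw [this, neg_sub, mul_assoc]
  have hcd : (c⁻¹ * d) ≠ 0 := mul_ne_zero (inv_ne_zero hc) hd
  rw [key, inv_neg, mul_inv_rev, mul_inv_rev, inv_inv]
  rw [mul_neg, ← sub_eq_add_neg, show b * (d⁻¹ * c * (a - b * d⁻¹ * c)⁻¹)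
      = b * d⁻¹ * c * (a - b * d⁻¹ * c)⁻¹ by simp [mul_assoc],
    ← sub_mul, mul_inv_cancel₀ h1]

lemma auxB {K : Type*} [DivisionRing K] (a b c d : K) (ha : a ≠ 0) (hb : b ≠ 0) :
    a * (c - d * b⁻¹ * a)⁻¹ + b * (d - c * a⁻¹ * b)⁻¹ = 0 := by
  have key : d - c * a⁻¹ * b = -((c - d * b⁻¹ * a) * (a⁻¹ * b)) := by
    rw [sub_mul]
    have : d * b⁻¹ * a * (a⁻¹ * b) = d := by
      rw [mul_assoc (d * b⁻¹) a, ← mul_assoc a, mul_inv_cancel₀ ha, one_mul,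
        mul_assoc, inv_mul_cancel₀ hb, mul_one]
    rw [this, neg_sub, mul_assoc]
  rw [key, inv_neg, mul_inv_rev, mul_inv_rev, inv_inv, mul_neg, ← mul_assoc, ← mul_assoc,
    mul_inv_cancel₀ hb, one_mul, add_neg_cancel]

theorem stmt_10 (a b c d : ℍ[ℝ]) (ha : a ≠ 0) (hb : b ≠ 0) (hc : c ≠ 0) (hd : d ≠ 0)
    (h1 : a - b * d⁻¹ * c ≠ 0) (h2 : b - a * c⁻¹ * d ≠ 0)
    (h3 : c - d * b⁻¹ * a ≠ 0) (h4 : d - c * a⁻¹ * b ≠ 0) :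
    !![a, b; c, d] *
      !![(a - b * d⁻¹ * c)⁻¹, (c - d * b⁻¹ * a)⁻¹;
         (b - a * c⁻¹ * d)⁻¹, (d - c * a⁻¹ * b)⁻¹] = 1 := by
  rw [Matrix.mul_fin_two, auxA a b c d hc hd h1, auxB a b c d ha hb,
    auxB c d a b hc hd, auxA c d a b ha hb h3, Matrix.one_fin_two]
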